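/- Witness update after deletion: let z' be the accumulator after deleting x' (so (z')^{x'} ≡ z mod N), let w be a witness for x in z (w^x ≡ z mod N), and let a, b be integers with a·x + b·x' = 1. Then w' = w^b · (z')^a satisfies (w')^x ≡ z' (mod N). -/
import Mathlib

/-- witness update after deletion in an RSA accumulator:
with `a·x + b·x' = 1`, `(z')^{x'} = z` and `w^x = z`,
the updated witness `w' = w^b · (z')^a` satisfies `(w')^x = z'`. -/
theorem rsa_witness_update_delete {N : ℕ} (z z' w : (ZMod N)ˣ)
    (x x' a b : ℤ) (hbezout : a * x + b * x' = 1)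
    (hdel : z' ^ x' = z) (hw : w ^ x = z) :
    (w ^ b * z' ^ a) ^ x = z' := by
  have : (w ^ b * z' ^ a) ^ x = z' ^ (b * x' + a * x) := by
    rw [mul_zpow, ← zpow_mul, ← zpow_mul, mul_comm b x, zpow_mul, hw, ← hdel, ← zpow_mul,
      ← zpow_add, mul_comm x' b]
  rw [this]
  rw [show b * x' + a * x = 1 by linarith, zpow_one]
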